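/- In any ontological model for ℂ² with D injective, for every unit vector ψ ∈ ℂ² and every unit vector ψ⊥ orthogonal to ψ, the measures satisfy ρ_ψ + ρ_{ψ⊥} = ρ₁, where ρ_ψ := D⁻¹(P_ψ), ρ_{ψ⊥} := D⁻¹(P_{ψ⊥}), and ρ₁ := 2·D⁻¹(½I). -/

import Mathlib

/-! Averaging `ρ_ψ` and `ρ_ψ⊥` gives a preparable measure whose response statistics are the
averages of theirs. Expectation values of the effects `P_u`, `u` a unit vector, determine a
matrix by polarization, so `D` is affine on mixtures and the average is sent to
`½ (P_ψ + P_ψ⊥) = ½ I`; injectivity of `D` identifies it with `D⁻¹(½ I)`. -/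

open MeasureTheory
open scoped NNReal ENNReal ComplexOrder

noncomputable section

/-- The rank-one projection `|ψ⟩⟨ψ|` associated with a vector `ψ ∈ ℂⁿ`. -/
def proj {n : ℕ} (ψ : EuclideanSpace ℂ (Fin n)) : Matrix (Fin n) (Fin n) ℂ :=
  Matrix.of fun i j => ψ i * (starRingEnd ℂ) (ψ j)

/-- An ontological model for `ℂⁿ`: a measurable space `Λ` of ontic states, a convex set `C`
of preparable probability measures on `Λ`, measurable response functions `p A : Λ → [0,1]`
for each effect `A` (`0 ≤ A ≤ 1` in the Loewner order), and a map `D` from `C` onto the set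
of density matrices reproducing the quantum statistics. -/
structure OntModel (n : ℕ) (Λ : Type*) [MeasurableSpace Λ] where
  C : Set (Measure Λ)
  prob : ∀ ρ ∈ C, IsProbabilityMeasure ρ
  convexC : ∀ ρa ∈ C, ∀ ρb ∈ C, ∀ s : ℝ≥0, s ≤ 1 → s • ρa + (1 - s) • ρb ∈ C
  p : Matrix (Fin n) (Fin n) ℂ → Λ → ℝ
  p_meas : ∀ A, Measurable (p A)
  p_nonneg : ∀ A l, 0 ≤ p A l
  p_le_one : ∀ A l, p A l ≤ 1
  D : Measure Λ → Matrix (Fin n) (Fin n) ℂ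
  D_psd : ∀ ρ ∈ C, (D ρ).PosSemidef
  D_trace : ∀ ρ ∈ C, (D ρ).trace = 1
  D_surj : ∀ W : Matrix (Fin n) (Fin n) ℂ, W.PosSemidef → W.trace = 1 → ∃ ρ ∈ C, D ρ = W
  agree : ∀ ρ ∈ C, ∀ A : Matrix (Fin n) (Fin n) ℂ, A.PosSemidef → (1 - A).PosSemidef →
    ((∫ l, p A l ∂ρ : ℝ) : ℂ) = (D ρ * A).trace

open Matrix

lemma proj_eq_vecMulVec {n : ℕ} (ψ : EuclideanSpace ℂ (Fin n)) :
    proj ψ = vecMulVec ⇑ψ (star ⇑ψ) := rfl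

lemma trace_mul_proj {n : ℕ} (X : Matrix (Fin n) (Fin n) ℂ) (ψ : EuclideanSpace ℂ (Fin n)) :
    (X * proj ψ).trace = inner ℂ ψ (toLpLin 2 2 X ψ) := by
  rw [proj_eq_vecMulVec, mul_vecMulVec, trace_vecMulVec]
  rfl

lemma posSemidef_proj {n : ℕ} (ψ : EuclideanSpace ℂ (Fin n)) : (proj ψ).PosSemidef :=
  posSemidef_vecMulVec_self_star _

lemma proj_mul_self {n : ℕ} {ψ : EuclideanSpace ℂ (Fin n)} (hψ : ‖ψ‖ = 1) :
    proj ψ * proj ψ = proj ψ := by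
  have : star ⇑ψ ⬝ᵥ ⇑ψ = 1 := by
    rw [dotProduct_comm, ← EuclideanSpace.inner_eq_star_dotProduct, inner_self_eq_norm_sq_to_K, hψ]
    simp
  rw [proj_eq_vecMulVec, vecMulVec_mul_vecMulVec, this, one_smul]

lemma posSemidef_one_sub_proj {n : ℕ} {ψ : EuclideanSpace ℂ (Fin n)} (hψ : ‖ψ‖ = 1) :
    (1 - proj ψ).PosSemidef := by
  have hP : (proj ψ)ᴴ = proj ψ := (posSemidef_proj ψ).isHermitian
  have : (1 - proj ψ)ᴴ * (1 - proj ψ) = 1 - proj ψ := by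
    rw [conjTranspose_sub, conjTranspose_one, hP, sub_mul, mul_sub, mul_sub,
      proj_mul_self hψ]
    simp
  exact this ▸ posSemidef_conjTranspose_mul_self _

lemma LinearMap.ext_inner_map_of_norm_eq_one {V : Type*} [NormedAddCommGroup V]
    [InnerProductSpace ℂ V] {S T : V →ₗ[ℂ] V}
    (h : ∀ u : V, ‖u‖ = 1 → inner ℂ (S u) u = inner ℂ (T u) u) : S = T := by
  refine (ext_inner_map S T).mp fun x => ?_
  rcases eq_or_ne x 0 with rfl | hx
  · simp
  have hx' : (‖x‖ : ℂ) ≠ 0 := by exact_mod_cast norm_ne_zero_iff.mpr hx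
  obtain ⟨u, hu, c, rfl⟩ : ∃ u : V, ‖u‖ = 1 ∧ ∃ c : ℂ, x = c • u := by
    refine ⟨(‖x‖⁻¹ : ℂ) • x, ?_, ‖x‖, by rw [smul_smul, mul_inv_cancel₀ hx', one_smul]⟩
    rw [norm_smul, norm_inv, Complex.norm_real, norm_norm, inv_mul_cancel₀ (norm_ne_zero_iff.mpr hx)]
  rw [map_smul, map_smul, inner_smul_left, inner_smul_left, inner_smul_right, inner_smul_right,
    h u hu]

lemma eq_of_trace_mul_proj_eq {n : ℕ} {X Y : Matrix (Fin n) (Fin n) ℂ}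
    (h : ∀ ψ : EuclideanSpace ℂ (Fin n), ‖ψ‖ = 1 → (X * proj ψ).trace = (Y * proj ψ).trace) :
    X = Y := by
  refine (toLpLin 2 2).injective (LinearMap.ext_inner_map_of_norm_eq_one fun u hu => ?_)
  rw [← inner_conj_symm, ← trace_mul_proj, h u hu, trace_mul_proj, inner_conj_symm]

lemma eq_of_trace_mul_effect_eq {n : ℕ} {X Y : Matrix (Fin n) (Fin n) ℂ}
    (h : ∀ A : Matrix (Fin n) (Fin n) ℂ, A.PosSemidef → (1 - A).PosSemidef →
      (X * A).trace = (Y * A).trace) : X = Y :=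
  eq_of_trace_mul_proj_eq fun ψ hψ => h _ (posSemidef_proj ψ) (posSemidef_one_sub_proj hψ)

lemma sum_proj_eq_one {n : ℕ} {v : Fin n → EuclideanSpace ℂ (Fin n)} (hv : Orthonormal ℂ v) :
    ∑ i, proj (v i) = 1 := by
  set U : Matrix (Fin n) (Fin n) ℂ := of fun i j => v j i
  rw [orthonormal_iff_ite] at hv
  have hU : Uᴴ * U = 1 := by
    ext i j
    simpa [U, mul_apply, one_apply, EuclideanSpace.inner_eq_star_dotProduct,
      dotProduct, mul_comm] using hv i j
  rw [← mul_eq_one_comm.mp hU]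
  ext i j
  simp [U, proj, mul_apply, Matrix.sum_apply]

lemma proj_add_proj_eq_one {ψ ψp : EuclideanSpace ℂ (Fin 2)} (hψ : ‖ψ‖ = 1) (hψp : ‖ψp‖ = 1)
    (horth : inner ℂ ψ ψp = 0) : proj ψ + proj ψp = 1 := by
  have hv : Orthonormal ℂ ![ψ, ψp] := by
    rw [orthonormal_iff_ite]
    intro i j
    fin_cases i <;> fin_cases j <;>
      simp [inner_self_eq_norm_sq_to_K, hψ, hψp, horth, inner_eq_zero_symm.mp horth]
  simpa using sum_proj_eq_one hv

namespace OntModel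

variable {n : ℕ} {Λ : Type*} [MeasurableSpace Λ] (M : OntModel n Λ)

lemma integrable_p (A : Matrix (Fin n) (Fin n) ℂ) (μ : Measure Λ) [IsFiniteMeasure μ] :
    Integrable (M.p A) μ :=
  .of_bound (M.p_meas A).aestronglyMeasurable 1 <| .of_forall fun l => by
    rw [Real.norm_eq_abs, abs_of_nonneg (M.p_nonneg A l)]
    exact M.p_le_one A l

lemma smul_add_smul_mem_C {ρa ρb : Measure Λ} (ha : ρa ∈ M.C) (hb : ρb ∈ M.C) {s t : ℝ≥0}
    (hst : s + t = 1) : s • ρa + t • ρb ∈ M.C := by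
  obtain rfl : t = 1 - s := by rw [← hst, add_tsub_cancel_left]
  exact M.convexC ρa ha ρb hb s (le_of_add_le_left hst.le)

lemma integral_p_smul_add_smul (A : Matrix (Fin n) (Fin n) ℂ) {ρa ρb : Measure Λ} (ha : ρa ∈ M.C)
    (hb : ρb ∈ M.C) (s t : ℝ≥0) :
    ∫ l, M.p A l ∂(s • ρa + t • ρb) = s * ∫ l, M.p A l ∂ρa + t * ∫ l, M.p A l ∂ρb := by
  have := M.prob ρa ha
  have := M.prob ρb hb
  rw [integral_add_measure (M.integrable_p A _) (M.integrable_p A _),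
    integral_smul_nnreal_measure, integral_smul_nnreal_measure, NNReal.smul_def, NNReal.smul_def,
    smul_eq_mul, smul_eq_mul]

lemma D_smul_add_smul {ρa ρb : Measure Λ} (ha : ρa ∈ M.C) (hb : ρb ∈ M.C) {s t : ℝ≥0}
    (hst : s + t = 1) :
    M.D (s • ρa + t • ρb) = ((s : ℝ) : ℂ) • M.D ρa + ((t : ℝ) : ℂ) • M.D ρb := by
  refine eq_of_trace_mul_effect_eq fun A hA hA' => ?_
  rw [← M.agree _ (M.smul_add_smul_mem_C ha hb hst) A hA hA', M.integral_p_smul_add_smul A ha hb,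
    add_mul, trace_add, smul_mul, smul_mul, trace_smul,
    trace_smul, ← M.agree ρa ha A hA hA', ← M.agree ρb hb A hA hA']
  push_cast
  rfl

end OntModel

/-- In an ontological model for `ℂ²` with `D` injective, for orthogonal unit vectors
`ψ, ψ⊥` the preparable measures `ρ_ψ = D⁻¹(P_ψ)`, `ρ_{ψ⊥} = D⁻¹(P_{ψ⊥})` satisfy
`ρ_ψ + ρ_{ψ⊥} = ρ₁` where `ρ₁ = 2 · D⁻¹(½ I)`. -/
theorem rho_add_rho_perp {Λ : Type*} [MeasurableSpace Λ] (M : OntModel 2 Λ)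
    (hinj : ∀ ρa ∈ M.C, ∀ ρb ∈ M.C, M.D ρa = M.D ρb → ρa = ρb)
    (ψ ψp : EuclideanSpace ℂ (Fin 2)) (hψ : ‖ψ‖ = 1) (hψp : ‖ψp‖ = 1)
    (horth : inner ℂ ψ ψp = (0 : ℂ))
    (ρψ ρψp ρhalf : Measure Λ)
    (hρψ : ρψ ∈ M.C) (hρψp : ρψp ∈ M.C) (hρhalf : ρhalf ∈ M.C)
    (hDψ : M.D ρψ = proj ψ) (hDψp : M.D ρψp = proj ψp)
    (hDhalf : M.D ρhalf = (1 / 2 : ℂ) • 1) :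
    ρψ + ρψp = (2 : ℝ≥0) • ρhalf := by
  have hhalf : (1 / 2 : ℝ≥0) + 1 / 2 = 1 := add_halves 1
  have hmix : M.D ((1 / 2 : ℝ≥0) • ρψ + (1 / 2 : ℝ≥0) • ρψp) = M.D ρhalf := by
    rw [M.D_smul_add_smul hρψ hρψp hhalf, hDψ, hDψp, ← smul_add, proj_add_proj_eq_one hψ hψp horth,
      hDhalf]
    norm_num
  rw [← hinj _ (M.smul_add_smul_mem_C hρψ hρψp hhalf) _ hρhalf hmix, smul_add, smul_smul,
    smul_smul]
  norm_num
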